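/- arXiv:2511.14344 — 3 statements merged into one kernel-verified Lean document; each statement's English description precedes it below -/
import Mathlib

section
/- Let N ≥ 2, let σ₁ < σ₂ < … < σ_N be real numbers, let 𝒥¹, …, 𝒥^N be nonzero real numbers, and let Q = [[Λ, −𝒥],[𝒥ᵀ, 0]] with Λ = diag(σ₁, …, σ_N). Then the characteristic polynomial of Q has at least N−1 distinct real roots, with at least one root in each open interval (σ_n, σ_{n+1}) for n = 1, …, N−1. -/
open Polynomial Matrix Finset

private lemma aux_charpoly_eval {n : Type*} [Fintype n] [DecidableEq n]
    (M : Matrix n n ℝ) (t : ℝ) :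
    M.charpoly.eval t = (t • (1 : Matrix n n ℝ) - M).det := by
  rw [Matrix.charpoly, ← Polynomial.coe_evalRingHom, RingHom.map_det]
  congr 1
  ext i j
  by_cases h : i = j <;> simp [h, charmatrix, diagonal, Matrix.one_apply, Matrix.smul_apply]

private lemma aux_prod_neg {ι : Type*} (s : Finset ι) (f : ι → ℝ) :
    ∏ i ∈ s, -f i = (-1) ^ s.card * ∏ i ∈ s, f i := by
  rw [← Finset.prod_const, ← Finset.prod_mul_distrib]
  exact Finset.prod_congr rfl fun i _ => by ring

private lemma aux_det_formula (N : ℕ) (σ 𝒥 : Fin N → ℝ) (lam : ℝ) (hl : ∀ i, lam ≠ σ i)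
    (Q : Matrix (Fin N ⊕ Unit) (Fin N ⊕ Unit) ℝ)
    (hQ : Q = Matrix.fromBlocks (Matrix.diagonal σ)
      (Matrix.of fun i (_ : Unit) => -𝒥 i)
      (Matrix.of fun (_ : Unit) j => 𝒥 j) 0) :
    (lam • (1 : Matrix (Fin N ⊕ Unit) (Fin N ⊕ Unit) ℝ) - Q).det
      = lam * ∏ i, (lam - σ i) + ∑ i, 𝒥 i ^ 2 * ∏ j ∈ univ.erase i, (lam - σ j) := by
  have hM : lam • (1 : Matrix (Fin N ⊕ Unit) (Fin N ⊕ Unit) ℝ) - Q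
      = fromBlocks (diagonal fun i => lam - σ i) (of fun i (_ : Unit) => 𝒥 i)
        (of fun (_ : Unit) j => -𝒥 j) (diagonal fun _ => lam) := by
    subst hQ
    ext (i | i) (j | j) <;>
      by_cases h : i = j <;>
      simp [h, Matrix.one_apply, diagonal, Matrix.smul_apply]
  have hne : ∀ i, lam - σ i ≠ 0 := fun i => sub_ne_zero.2 (hl i)
  have hdet : (diagonal fun i => lam - σ i).det ≠ 0 := by
    rw [det_diagonal]; exact Finset.prod_ne_zero_iff.2 fun i _ => hne i
  haveI : Invertible (diagonal fun i : Fin N => lam - σ i) :=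
    (diagonal fun i => lam - σ i).invertibleOfIsUnitDet (isUnit_iff_ne_zero.2 hdet)
  have hinv : (diagonal fun i : Fin N => lam - σ i)⁻¹
      = diagonal fun i => (lam - σ i)⁻¹ := by
    refine Matrix.inv_eq_right_inv ?_
    rw [diagonal_mul_diagonal]
    have : (fun i => (lam - σ i) * (lam - σ i)⁻¹) = fun _ : Fin N => (1 : ℝ) :=
      funext fun i => mul_inv_cancel₀ (hne i)
    rw [this, diagonal_one]
  rw [hM, det_fromBlocks₁₁, invOf_eq_nonsing_inv, hinv]
  rw [det_diagonal, det_unique]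
  have : ((diagonal fun _ : Unit => lam) -
      (of fun (_ : Unit) j => -𝒥 j) * (diagonal fun i => (lam - σ i)⁻¹) *
        (of fun i (_ : Unit) => 𝒥 i)) default default
      = lam + ∑ i, 𝒥 i ^ 2 * (lam - σ i)⁻¹ := by
    simp [Matrix.mul_apply, diagonal, sub_eq_add_neg]
    exact Finset.sum_congr rfl fun i _ => by ring
  rw [this, mul_add, mul_comm lam, Finset.mul_sum]
  congr 1
  refine Finset.sum_congr rfl fun i _ => ?_
  have := Finset.prod_erase_mul univ (fun j => lam - σ j) (Finset.mem_univ i)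
  rw [← this]
  rw [inv_eq_one_div, ← mul_assoc]
  rw [mul_right_comm _ (lam - σ i), mul_assoc, mul_one_div, div_self (hne i), mul_one]
  exact mul_comm _ _

/-- For `σ₁ < … < σ_N` and all `𝒥ⁿ ≠ 0`, the characteristic polynomial of the block
matrix `Q = [[Λ, −𝒥],[𝒥ᵀ, 0]]` (with `Λ = diag(σ₁,…,σ_N)`) has at least `N − 1`
distinct real roots, with at least one root in each open interval `(σₙ, σₙ₊₁)`. -/
theorem charpoly_has_N_minus_one_real_roots
    (N : ℕ) (hN : 2 ≤ N) (σ 𝒥 : Fin N → ℝ)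
    (hσ : StrictMono σ) (h𝒥 : ∀ n, 𝒥 n ≠ 0)
    (Q : Matrix (Fin N ⊕ Unit) (Fin N ⊕ Unit) ℝ)
    (hQ : Q = Matrix.fromBlocks (Matrix.diagonal σ)
      (Matrix.of fun i (_ : Unit) => -𝒥 i)
      (Matrix.of fun (_ : Unit) j => 𝒥 j) 0) :
    N - 1 ≤ Q.charpoly.roots.toFinset.card ∧
    ∀ (n : Fin N) (hn : (n : ℕ) + 1 < N),
      ∃ lam ∈ Set.Ioo (σ n) (σ ⟨(n : ℕ) + 1, hn⟩), Q.charpoly.IsRoot lam := by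
  classical
  set p : ℝ[X] := X * ∏ i, (X - C (σ i)) +
      ∑ i, C (𝒥 i ^ 2) * ∏ j ∈ univ.erase i, (X - C (σ j)) with hp
  have hpeval : ∀ t : ℝ, p.eval t =
      t * ∏ i, (t - σ i) + ∑ i, 𝒥 i ^ 2 * ∏ j ∈ univ.erase i, (t - σ j) := by
    intro t
    simp [hp, eval_prod, eval_finset_sum]
  -- `Q.charpoly = p`
  have hcp : Q.charpoly = p := by
    apply Polynomial.eq_of_infinite_eval_eq
    apply Set.Infinite.mono (s := (Set.range σ)ᶜ)
    · intro lam hlam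
      have hl : ∀ i, lam ≠ σ i := by
        intro i hi
        exact hlam ⟨i, hi.symm⟩
      show Q.charpoly.eval lam = p.eval lam
      rw [aux_charpoly_eval, hpeval, aux_det_formula N σ 𝒥 lam hl Q hQ]
    · exact (Set.finite_range σ).infinite_compl
  -- evaluation at the `σ n`
  have hevalσ : ∀ n : Fin N, p.eval (σ n) =
      𝒥 n ^ 2 * ∏ j ∈ univ.erase n, (σ n - σ j) := by
    intro n
    rw [hpeval]
    rw [Finset.prod_eq_zero (Finset.mem_univ n) (by ring), mul_zero, zero_add]
    rw [Finset.sum_eq_single n]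
    · intro i _ hi
      rw [Finset.prod_eq_zero (Finset.mem_erase.2 ⟨Ne.symm hi, Finset.mem_univ n⟩)
        (by ring : σ n - σ n = 0), mul_zero]
    · intro h; exact absurd (Finset.mem_univ n) h
  -- sign alternation at consecutive `σ`'s
  have hsign : ∀ (n : Fin N) (hn : (n : ℕ) + 1 < N),
      p.eval (σ n) * p.eval (σ ⟨(n : ℕ) + 1, hn⟩) < 0 := by
    intro n hn
    set m : Fin N := ⟨(n : ℕ) + 1, hn⟩ with hm
    have hsplit : ∀ k : Fin N, ∏ j ∈ univ.erase k, (σ k - σ j) =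
        (∏ j ∈ univ.filter (· < k), (σ k - σ j)) *
        ((-1) ^ (univ.filter (k < ·)).card * ∏ j ∈ univ.filter (k < ·), (σ j - σ k)) := by
      intro k
      have hu : univ.erase k = univ.filter (· < k) ∪ univ.filter (k < ·) := by
        ext j
        simp only [Finset.mem_erase, Finset.mem_union, Finset.mem_filter, Finset.mem_univ,
          true_and, and_true]
        exact ⟨fun h => Ne.lt_or_gt h, fun h => h.elim ne_of_lt ne_of_gt⟩
      have hdisj : Disjoint (univ.filter (· < k)) (univ.filter (k < ·)) := by
        simp only [Finset.disjoint_left, Finset.mem_filter, Finset.mem_univ, true_and]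
        exact fun j hj hj' => absurd (hj.trans hj') (lt_irrefl j)
      rw [hu, Finset.prod_union hdisj]
      congr 1
      rw [← aux_prod_neg]
      exact Finset.prod_congr rfl fun j _ => by ring
    have hApos : ∀ k : Fin N, 0 < ∏ j ∈ univ.filter (· < k), (σ k - σ j) :=
      fun k => Finset.prod_pos fun j hj =>
        sub_pos.2 (hσ (Finset.mem_filter.1 hj).2)
    have hPpos : ∀ k : Fin N, 0 < ∏ j ∈ univ.filter (k < ·), (σ j - σ k) :=
      fun k => Finset.prod_pos fun j hj =>
        sub_pos.2 (hσ (Finset.mem_filter.1 hj).2)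
    have hcard : (univ.filter (n < ·)).card = (univ.filter (m < ·)).card + 1 := by
      have : univ.filter (n < ·) = insert m (univ.filter (m < ·)) := by
        ext j
        simp only [Finset.mem_filter, Finset.mem_univ, true_and, Finset.mem_insert]
        constructor
        · intro h
          rcases eq_or_lt_of_le (show m ≤ j from by
            rw [Fin.le_def]; rw [Fin.lt_def] at h; simpa [hm] using h) with h' | h'
          · exact Or.inl h'.symm
          · exact Or.inr h'
        · intro h
          rcases h with h | h
          · subst h; rw [Fin.lt_def]; simp [hm]
          · rw [Fin.lt_def]; rw [Fin.lt_def] at h; simp only [hm] at h ⊢; omega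
      rw [this, Finset.card_insert_of_notMem (by simp)]
    rw [hevalσ n, hevalσ m, hsplit n, hsplit m, hcard]
    set q : ℝ := (-1) ^ (univ.filter (m < ·)).card with hq
    have hqq : q * q = 1 := by
      rw [hq, ← pow_add]
      exact Even.neg_one_pow ⟨(univ.filter (m < ·)).card, rfl⟩
    have h𝒥n : (0:ℝ) < 𝒥 n ^ 2 :=
      lt_of_le_of_ne (sq_nonneg _) (Ne.symm (pow_ne_zero 2 (h𝒥 n)))
    have h𝒥m : (0:ℝ) < 𝒥 m ^ 2 :=
      lt_of_le_of_ne (sq_nonneg _) (Ne.symm (pow_ne_zero 2 (h𝒥 m)))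
    have key : 𝒥 n ^ 2 * ((∏ j ∈ univ.filter (· < n), (σ n - σ j)) *
          ((-1) ^ ((univ.filter (m < ·)).card + 1) * ∏ j ∈ univ.filter (n < ·), (σ j - σ n))) *
        (𝒥 m ^ 2 * ((∏ j ∈ univ.filter (· < m), (σ m - σ j)) *
          (q * ∏ j ∈ univ.filter (m < ·), (σ j - σ m)))) =
        -(q * q) * (𝒥 n ^ 2 * 𝒥 m ^ 2 * (∏ j ∈ univ.filter (· < n), (σ n - σ j)) *
          (∏ j ∈ univ.filter (n < ·), (σ j - σ n)) *
          (∏ j ∈ univ.filter (· < m), (σ m - σ j)) *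
          (∏ j ∈ univ.filter (m < ·), (σ j - σ m))) := by
      rw [pow_succ (-1 : ℝ) (univ.filter (m < ·)).card, ← hq]; ring
    rw [key, hqq]
    have : 0 < 𝒥 n ^ 2 * 𝒥 m ^ 2 * (∏ j ∈ univ.filter (· < n), (σ n - σ j)) *
          (∏ j ∈ univ.filter (n < ·), (σ j - σ n)) *
          (∏ j ∈ univ.filter (· < m), (σ m - σ j)) *
          (∏ j ∈ univ.filter (m < ·), (σ j - σ m)) := by
      have := hApos n; have := hApos m; have := hPpos n; have := hPpos m
      positivity
    linarith
  -- the interval claim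
  have H2 : ∀ (n : Fin N) (hn : (n : ℕ) + 1 < N),
      ∃ lam ∈ Set.Ioo (σ n) (σ ⟨(n : ℕ) + 1, hn⟩), Q.charpoly.IsRoot lam := by
    intro n hn
    set m : Fin N := ⟨(n : ℕ) + 1, hn⟩ with hm
    have hlt : σ n < σ m := hσ (by rw [Fin.lt_def]; simp [hm])
    have hcont : ContinuousOn (fun t => p.eval t) (Set.Icc (σ n) (σ m)) :=
      (Polynomial.continuous p).continuousOn
    have := hsign n hn
    rcases mul_neg_iff.1 this with ⟨h1, h2⟩ | ⟨h1, h2⟩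
    · -- eval σ n > 0 > eval σ m : decreasing case
      have : (0:ℝ) ∈ Set.Ioo (p.eval (σ m)) (p.eval (σ n)) := ⟨h2, h1⟩
      obtain ⟨lam, hlam, hroot⟩ := intermediate_value_Ioo' hlt.le hcont this
      exact ⟨lam, hlam, by rw [hcp]; exact hroot⟩
    · have : (0:ℝ) ∈ Set.Ioo (p.eval (σ n)) (p.eval (σ m)) := ⟨h1, h2⟩
      obtain ⟨lam, hlam, hroot⟩ := intermediate_value_Ioo hlt.le hcont this
      exact ⟨lam, hlam, by rw [hcp]; exact hroot⟩
  refine ⟨?_, H2⟩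
  -- pick one root in each interval
  have key : ∀ k : Fin (N - 1), ∃ lam,
      lam ∈ Set.Ioo (σ ⟨(k : ℕ), by have := k.isLt; omega⟩)
        (σ ⟨(k : ℕ) + 1, by have := k.isLt; omega⟩) ∧
        Q.charpoly.IsRoot lam := by
    intro k
    have hk : (k : ℕ) < N - 1 := k.isLt
    obtain ⟨lam, h1, h2⟩ := H2 ⟨(k : ℕ), by omega⟩ (by show (k : ℕ) + 1 < N; omega)
    exact ⟨lam, h1, h2⟩
  choose g hg1 hg2 using key
  have hmono : StrictMono g := by
    intro k l hkl
    have hk := k.isLt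
    have hl := l.isLt
    have hkl' : (k : ℕ) < (l : ℕ) := hkl
    have h1 : g k < σ ⟨(k : ℕ) + 1, by omega⟩ := (hg1 k).2
    have h2 : σ ⟨(l : ℕ), by omega⟩ < g l := (hg1 l).1
    have h3 : σ ⟨(k : ℕ) + 1, by omega⟩ ≤ σ ⟨(l : ℕ), by omega⟩ :=
      hσ.monotone (by rw [Fin.le_def]; simp; omega)
    linarith
  have hQ0 : Q.charpoly ≠ 0 := (Matrix.charpoly_monic Q).ne_zero
  calc N - 1 = (univ : Finset (Fin (N - 1))).card := by simp
    _ ≤ Q.charpoly.roots.toFinset.card := by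
        apply Finset.card_le_card_of_injOn g
        · intro k _
          rw [Finset.mem_coe, Multiset.mem_toFinset, Polynomial.mem_roots hQ0]
          exact hg2 k
        · exact hmono.injective.injOn
end

section
/- Let (X, μ) be a probability space, Φ : X → X a measurable, measure-preserving bijection with measurable inverse, and ε : X → X a measurable, measure-preserving map with ε ∘ ε = id and ε ∘ Φ = Φ⁻¹ ∘ ε. Let Ψ : X → ℝ^N be measurable with integrable pairwise products of the form Ψ_i(x)·Ψ_j(Φ^{±1}(x)), and let M ∈ ℝ^{N×N} satisfy Ψ(ε(x)) = M·Ψ(x) for all x ∈ X. Then the matrix C⁻(i,j) := ∫_X Ψ_i(x)·Ψ_j(Φ⁻¹(x)) dμ(x) satisfies C⁻ = M · C⁺ · Mᵀ, where C⁺(i,j) := ∫_X Ψ_i(x)·Ψ_j(Φ(x)) dμ(x). -/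
/-!
Substituting `x ↦ ε x` in `C⁻` (allowed since `ε` preserves `μ`) and using
`Φ⁻¹ ∘ ε = ε ∘ Φ` turns the integrand `Ψᵢ(x) Ψⱼ(Φ⁻¹ x)` into `(MΨ(x))ᵢ (MΨ(Φ x))ⱼ`;
linearity of the integral then pulls `M` out on the left and `Mᵀ` on the right.
-/

open MeasureTheory Matrix

namespace MeasureTheory

variable {X Y 𝕜 l m n p : Type*} [MeasurableSpace X] [MeasurableSpace Y] [RCLike 𝕜]

noncomputable def crossCorrelation (μ : Measure X) (u : X → m → 𝕜) (v : X → n → 𝕜) :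
    Matrix m n 𝕜 :=
  Matrix.of fun i j => ∫ x, u x i * v x j ∂μ

theorem crossCorrelation_comp {μ : Measure X} {ν : Measure Y} {f : X → Y}
    (hf : MeasurePreserving f μ ν) (hfe : MeasurableEmbedding f)
    (u : Y → m → 𝕜) (v : Y → n → 𝕜) :
    crossCorrelation μ (fun x => u (f x)) (fun x => v (f x)) = crossCorrelation ν u v := by
  ext i j
  exact hf.integral_comp hfe fun y => u y i * v y j

theorem crossCorrelation_mulVec_mulVec [Fintype m] [Fintype n] {μ : Measure X}
    {u : X → m → 𝕜} {v : X → n → 𝕜}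
    (huv : ∀ i j, Integrable (fun x => u x i * v x j) μ)
    (A : Matrix l m 𝕜) (B : Matrix p n 𝕜) :
    crossCorrelation μ (fun x => A *ᵥ u x) (fun x => B *ᵥ v x) =
      A * crossCorrelation μ u v * Bᵀ := by
  ext i j
  have hexpand : ∀ x, (A *ᵥ u x) i * (B *ᵥ v x) j =
      ∑ k', ∑ k, A i k * B j k' * (u x k * v x k') := by
    intro x
    simp only [mulVec, dotProduct, Finset.sum_mul, Finset.mul_sum]
    exact Finset.sum_congr rfl fun k' _ => Finset.sum_congr rfl fun k _ => by ring
  have hint : ∀ k k', Integrable (fun x => A i k * B j k' * (u x k * v x k')) μ :=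
    fun k k' => (huv k k').const_mul _
  simp only [crossCorrelation, of_apply, hexpand, mul_apply, transpose_apply, Finset.sum_mul]
  rw [integral_finsetSum _ fun k' _ => integrable_finsetSum _ fun k _ => hint k k']
  refine Finset.sum_congr rfl fun k' _ => ?_
  rw [integral_finsetSum _ fun k _ => hint k k']
  exact Finset.sum_congr rfl fun k _ => by rw [integral_const_mul]; ring

end MeasureTheory

theorem onsager_casimir_backward_correlator_general
    {X : Type*} [MeasurableSpace X] (μ : Measure X)
    (N : ℕ) (Φ Φinv ε : X → X)
    (hε : Measurable ε)
    (hεpres : MeasurePreserving ε μ μ)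
    (hεinv : ε ∘ ε = id)
    (hεΦ : ε ∘ Φ = Φinv ∘ ε)
    (Ψ : X → Fin N → ℝ)
    (hint1 : ∀ i j, Integrable (fun x => Ψ x i * Ψ (Φ x) j) μ)
    (M : Matrix (Fin N) (Fin N) ℝ)
    (hM : ∀ x, Ψ (ε x) = M.mulVec (Ψ x)) :
    (Matrix.of fun i j => ∫ x, Ψ x i * Ψ (Φinv x) j ∂μ) =
      M * (Matrix.of fun i j => ∫ x, Ψ x i * Ψ (Φ x) j ∂μ) * Mᵀ := by
  have hεemb : MeasurableEmbedding ε :=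
    (MeasurableEquiv.ofInvolutive ε (congrFun hεinv) hε).measurableEmbedding
  have hreverse : ∀ x, Ψ (Φinv (ε x)) = M *ᵥ Ψ (Φ x) := fun x => by
    rw [← hM, ← Function.comp_apply (f := Φinv), ← hεΦ, Function.comp_apply]
  calc crossCorrelation μ Ψ (fun x => Ψ (Φinv x))
      = crossCorrelation μ (fun x => Ψ (ε x)) (fun x => Ψ (Φinv (ε x))) :=
        (crossCorrelation_comp hεpres hεemb _ _).symm
    _ = crossCorrelation μ (fun x => M *ᵥ Ψ x) (fun x => M *ᵥ Ψ (Φ x)) := by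
        simp only [hM, hreverse]
    _ = M * crossCorrelation μ Ψ (fun x => Ψ (Φ x)) * Mᵀ :=
        crossCorrelation_mulVec_mulVec hint1 M M

/-- Onsager–Casimir: if `ε` is a measure-preserving involution with `ε ∘ Φ = Φ⁻¹ ∘ ε`
and the observables transform as `Ψ ∘ ε = M·Ψ`, then the backward correlator
`C⁻(i,j) = ∫ Ψᵢ(x)·Ψⱼ(Φ⁻¹x) dμ` satisfies `C⁻ = M · C⁺ · Mᵀ`, where
`C⁺(i,j) = ∫ Ψᵢ(x)·Ψⱼ(Φx) dμ`. -/
theorem onsager_casimir_backward_correlator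
    {X : Type*} [MeasurableSpace X] (μ : Measure X) [IsProbabilityMeasure μ]
    (N : ℕ) (Φ Φinv ε : X → X)
    (hΦ : Measurable Φ) (hΦinv : Measurable Φinv) (hε : Measurable ε)
    (hleft : Function.LeftInverse Φinv Φ)
    (hright : Function.RightInverse Φinv Φ)
    (hpres : MeasurePreserving Φ μ μ)
    (hεpres : MeasurePreserving ε μ μ)
    (hεinv : ε ∘ ε = id)
    (hεΦ : ε ∘ Φ = Φinv ∘ ε)
    (Ψ : X → Fin N → ℝ) (hΨ : Measurable Ψ)
    (hint1 : ∀ i j, Integrable (fun x => Ψ x i * Ψ (Φ x) j) μ)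
    (hint2 : ∀ i j, Integrable (fun x => Ψ x i * Ψ (Φinv x) j) μ)
    (M : Matrix (Fin N) (Fin N) ℝ)
    (hM : ∀ x, Ψ (ε x) = M.mulVec (Ψ x)) :
    (Matrix.of fun i j => ∫ x, Ψ x i * Ψ (Φinv x) j ∂μ) =
      M * (Matrix.of fun i j => ∫ x, Ψ x i * Ψ (Φ x) j ∂μ) * Mᵀ :=
  onsager_casimir_backward_correlator_general μ N Φ Φinv ε hε hεpres hεinv hεΦ Ψ hint1 M hM
end

section
/- Let τ > 0, e > 0, m > 0, let E : ℝ → ℝ³ be continuous, and let f : ℝ × ℝ³ → ℝ be continuously differentiable, with f(t, ·) compactly supported uniformly for t in compact sets. Define the angular average ⟨f⟩(t, p) as the mean of f(t, ·) over the sphere of radius ‖p‖ centered at the origin, and suppose f satisfies the Boltzmann–Vlasov equation ∂ₜf(t,p) − e·E(t)·∇_p f(t,p) = (⟨f⟩(t,p) − f(t,p))/τ for all (t,p). Define n_e(t) = ∫_{ℝ³} (2/(2π)³)·f(t,p) dp and J(t) = −(e/m)·∫_{ℝ³} (2/(2π)³)·f(t,p)·p dp. Then J is differentiable and satisfies τ·J′(t)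 + J(t) = (e²·n_e(t)·τ/m)·E(t) for all t. -/
open MeasureTheory

/-- Momentum space of the electrons. -/
abbrev MomSpace : Type := EuclideanSpace ℝ (Fin 3)

/-- The angular average `⟨f⟩(t,p)`: the mean of `f(t,·)` over the sphere of radius
`‖p‖` centered at the origin, realized as the average over the unit sphere (with its
canonical surface measure `volume.toSphere`) of `u ↦ f(t, ‖p‖•u)`. -/
noncomputable def angularAverage (f : ℝ → MomSpace → ℝ) (t : ℝ) (p : MomSpace) : ℝ :=
  ⨍ u : Metric.sphere (0 : MomSpace) 1,
    f t (‖p‖ • (u : MomSpace)) ∂((volume : Measure MomSpace).toSphere)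

/-- The electron number density `n_e(t) = ∫ (2/(2π)³) f(t,p) dp`. -/
noncomputable def electronDensity (f : ℝ → MomSpace → ℝ) (t : ℝ) : ℝ :=
  ∫ p : MomSpace, (2 / (2 * Real.pi) ^ 3) * f t p

/-- The electric current `J(t) = −(e/m) ∫ (2/(2π)³) f(t,p) p dp`. -/
noncomputable def drudeCurrent (e m : ℝ) (f : ℝ → MomSpace → ℝ) (t : ℝ) : MomSpace :=
  (-(e / m)) • ∫ p : MomSpace, ((2 / (2 * Real.pi) ^ 3) * f t p) • p

/-- Integration by parts: for a compactly supported `C¹` function `g` on momentum space,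
`∫ (Dg(p) w) • p = (−∫ g) • w`. -/
lemma drude_ibp (g : MomSpace → ℝ) (w : MomSpace) (hg : ContDiff ℝ 1 g)
    (h1 : Integrable (fun p => fderiv ℝ g p w • p))
    (h2 : Integrable g) (h3 : Integrable (fun p => g p • p)) :
    ∫ p, (fderiv ℝ g p w) • p = (- ∫ p, g p) • w := by
  have h4 : ∀ p : MomSpace, fderiv ℝ (fun p : MomSpace => p) p w = w := by
    intro p; rw [fderiv_id']; rfl
  have key := integral_smul_fderiv_eq_neg_fderiv_smul_of_integrable (μ := volume)
    (f := g) (g := fun p : MomSpace => p) (v := w) h1 ?_ h3 (fun x _ => hg.differentiable one_ne_zero x)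
    (fun x _ => differentiableAt_id)
  · simp only [h4] at key
    rw [integral_smul_const] at key
    rw [neg_smul, key, neg_neg]
  · simp only [h4]; exact h2.smul_const w

/-- The integral of `g(p) • p` vanishes when `g` is even. -/
lemma drude_odd (g : MomSpace → ℝ) (hg : ∀ p, g (-p) = g p) :
    ∫ p, g p • p = 0 := by
  have h1 : ∫ p : MomSpace, g (-p) • (-p) = ∫ p : MomSpace, g p • p :=
    integral_neg_eq_self (fun p => g p • p) volume
  have h2 : (fun p : MomSpace => g (-p) • (-p)) = fun p => -(g p • p) := by
    funext p; rw [hg]; simp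
  rw [h2, integral_neg] at h1
  have h3 : (2 : ℝ) • (∫ p : MomSpace, g p • p) = 0 := by
    rw [two_smul]; nth_rewrite 1 [← h1]; simp
  exact (smul_eq_zero.mp h3).resolve_left (by norm_num)

/-- In the Drude kinetic model at zero wavenumber, if the distribution function `f`
satisfies the Boltzmann–Vlasov equation
`∂ₜf − e·E(t)·∇ₚf = (⟨f⟩ − f)/τ`
with elastic isotropic collision term, then the electric current
`J(t) = −(e/m)∫ (2/(2π)³) f(t,p) p dp` is differentiable and obeys the exact
Israel–Stewart relaxation equation `τJ′(t) + J(t) = (e²n_e(t)τ/m)·E(t)`. -/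
theorem drude_israel_stewart_relaxation
    (τ e m : ℝ) (hτ : 0 < τ) (he : 0 < e) (hm : 0 < m)
    (E : ℝ → MomSpace) (hE : Continuous E)
    (f : ℝ → MomSpace → ℝ)
    (hf : ContDiff ℝ 1 (Function.uncurry f))
    (hsupp : ∀ K : Set ℝ, IsCompact K →
      ∃ R : ℝ, ∀ t ∈ K, ∀ p : MomSpace, R ≤ ‖p‖ → f t p = 0)
    (hBV : ∀ (t : ℝ) (p : MomSpace),
      deriv (fun s => f s p) t - e * fderiv ℝ (fun q => f t q) p (E t)
        = (angularAverage f t p - f t p) / τ) :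
    ∃ J' : ℝ → MomSpace,
      (∀ t, HasDerivAt (drudeCurrent e m f) (J' t) t) ∧
      (∀ t, τ • J' t + drudeCurrent e m f t
          = ((e ^ 2 * electronDensity f t * τ) / m) • E t) := by
  classical
  set c : ℝ := 2 / (2 * Real.pi) ^ 3 with hc
  set df : ℝ → MomSpace → ℝ := fun t p => deriv (fun s => f s p) t with hdfdef
  -- basic regularity
  have hfc : Continuous (Function.uncurry f) := hf.continuous
  have hftc : ∀ t : ℝ, Continuous (f t) := fun t =>
    hfc.comp (continuous_const.prodMk continuous_id)
  have hft : ∀ t : ℝ, ContDiff ℝ 1 (f t) := fun t =>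
    hf.comp ((contDiff_const (c := t)).prodMk contDiff_id)
  have hkey : ∀ (t : ℝ) (p : MomSpace),
      HasDerivAt (fun s => f s p) (fderiv ℝ (Function.uncurry f) (t, p) (1, 0)) t := by
    intro t p
    have h1 : HasFDerivAt (Function.uncurry f) (fderiv ℝ (Function.uncurry f) (t, p)) (t, p) :=
      (hf.differentiable one_ne_zero _).hasFDerivAt
    have h2 : HasDerivAt (fun s : ℝ => (s, p)) ((1 : ℝ), (0 : MomSpace)) t :=
      (hasDerivAt_id t).prodMk (hasDerivAt_const t p)
    exact h1.comp_hasDerivAt t h2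
  have hdf : ∀ (t : ℝ) (p : MomSpace),
      df t p = fderiv ℝ (Function.uncurry f) (t, p) (1, 0) := fun t p => (hkey t p).deriv
  have hdf_cont : Continuous (Function.uncurry df) := by
    have h : Function.uncurry df
        = fun q : ℝ × MomSpace => fderiv ℝ (Function.uncurry f) q (1, 0) := by
      funext q; exact hdf q.1 q.2
    rw [h]
    exact (hf.continuous_fderiv one_ne_zero).clm_apply continuous_const
  set G : ℝ → MomSpace := fun t => ∫ p : MomSpace, (c * f t p) • p with hG
  set G' : ℝ → MomSpace := fun t => ∫ p : MomSpace, (c * df t p) • p with hG'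
  have hJdef : ∀ t, drudeCurrent e m f t = (-(e / m)) • G t := fun t => rfl
  -- Claim A : differentiation under the integral sign
  have claimA : ∀ t₀ : ℝ, Integrable (fun p : MomSpace => (c * df t₀ p) • p) ∧
      HasDerivAt G (G' t₀) t₀ := by
    intro t₀
    obtain ⟨R₀, hR₀⟩ := hsupp (Metric.closedBall t₀ 1) (isCompact_closedBall _ _)
    set R : ℝ := max R₀ 1 with hRdef
    have hR1 : (0 : ℝ) < R := lt_of_lt_of_le one_pos (le_max_right _ _)
    have hfz : ∀ s ∈ Metric.closedBall t₀ 1, ∀ p : MomSpace, R ≤ ‖p‖ → f s p = 0 :=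
      fun s hs p hp => hR₀ s hs p (le_trans (le_max_left _ _) hp)
    have hdfz : ∀ s ∈ Metric.ball t₀ 1, ∀ p : MomSpace, R ≤ ‖p‖ → df s p = 0 := by
      intro s hs p hp
      have hev : (fun s' => f s' p) =ᶠ[nhds s] (fun _ => (0 : ℝ)) := by
        filter_upwards [Metric.isOpen_ball.mem_nhds hs] with s' hs'
        exact hfz s' (Metric.ball_subset_closedBall hs') p hp
      have h0 : df s p = deriv (fun _ : ℝ => (0 : ℝ)) s := hev.deriv_eq
      simpa using h0
    obtain ⟨C, hC⟩ := ((isCompact_closedBall t₀ 1).prod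
      (isCompact_closedBall (0 : MomSpace) R)).exists_bound_of_continuousOn
      hdf_cont.continuousOn
    have hC0 : 0 ≤ C := le_trans (norm_nonneg _)
      (hC (t₀, 0) (Set.mem_prod.mpr ⟨Metric.mem_closedBall_self one_pos.le,
        by simp [hR1.le]⟩))
    set bound : MomSpace → ℝ :=
      (Metric.closedBall (0 : MomSpace) R).indicator (fun _ => |c| * C * R) with hbdef
    have hcont_int : ∀ s : ℝ, Continuous (fun p : MomSpace => (c * f s p) • p) := fun s =>
      (continuous_const.mul (hftc s)).smul continuous_id
    have main := hasDerivAt_integral_of_dominated_loc_of_deriv_le (μ := volume)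
      (F := fun s (p : MomSpace) => (c * f s p) • p)
      (F' := fun s (p : MomSpace) => (c * df s p) • p)
      (x₀ := t₀) (bound := bound) (s := Metric.ball t₀ 1) (Metric.ball_mem_nhds t₀ one_pos)
      (Filter.Eventually.of_forall fun s => (hcont_int s).aestronglyMeasurable)
      ?_ ?_ ?_ ?_ ?_
    · exact main
    · -- integrability at t₀
      apply (hcont_int t₀).integrable_of_hasCompactSupport
      apply HasCompactSupport.intro (isCompact_closedBall (0 : MomSpace) R)
      intro p hp
      have hp' : R ≤ ‖p‖ := le_of_lt (by simpa [Metric.mem_closedBall, dist_zero_right] using hp)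
      rw [hfz t₀ (Metric.mem_closedBall_self one_pos.le) p hp']
      simp
    · -- measurability of F' t₀
      exact ((continuous_const.mul
        (hdf_cont.comp (continuous_const.prodMk continuous_id))).smul
        continuous_id).aestronglyMeasurable
    · -- bound
      refine Filter.Eventually.of_forall fun p => fun s hs => ?_
      show ‖(c * df s p) • p‖ ≤ bound p
      by_cases hp : ‖p‖ ≤ R
      · have hmem : (s, p) ∈ Metric.closedBall t₀ 1 ×ˢ Metric.closedBall (0 : MomSpace) R :=
          Set.mem_prod.mpr ⟨Metric.ball_subset_closedBall hs,
            mem_closedBall_zero_iff.mpr hp⟩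
        have hdfb : |df s p| ≤ C := by
          simpa [Real.norm_eq_abs, Function.uncurry] using hC (s, p) hmem
        have hnorm : ‖(c * df s p) • p‖ = |c| * |df s p| * ‖p‖ := by
          rw [norm_smul, Real.norm_eq_abs, abs_mul]
        rw [hnorm, hbdef, Set.indicator_of_mem (mem_closedBall_zero_iff.mpr hp)]
        have h1 : |c| * |df s p| * ‖p‖ ≤ |c| * C * ‖p‖ := by gcongr
        exact h1.trans (mul_le_mul_of_nonneg_left hp (by positivity))
      · have h0 : df s p = 0 := hdfz s hs p (le_of_lt (not_le.mp hp))
        rw [h0]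
        simp only [mul_zero, zero_smul, norm_zero]
        exact Set.indicator_nonneg (fun _ _ => by positivity) p
    · -- bound integrable
      rw [hbdef, integrable_indicator_iff measurableSet_closedBall]
      exact (integrableOn_const_iff).mpr (Or.inr measure_closedBall_lt_top)
    · -- differentiability
      refine Filter.Eventually.of_forall fun p => fun s hs => ?_
      have h := ((hkey s p).const_mul c).smul_const p
      show HasDerivAt (fun s => (c * f s p) • p) ((c * df s p) • p) s
      rwa [← hdf s p] at h
  -- Claim B : identity for G'
  have claimB : ∀ t : ℝ,
      G' t = (c * e) • ((- ∫ p : MomSpace, f t p) • E t) - τ⁻¹ • G t := by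
    intro t
    obtain ⟨R₀, hR₀⟩ := hsupp {t} isCompact_singleton
    set R : ℝ := max R₀ 1 with hRdef
    have hR1 : (0 : ℝ) < R := lt_of_lt_of_le one_pos (le_max_right _ _)
    have hfz : ∀ p : MomSpace, R ≤ ‖p‖ → f t p = 0 :=
      fun p hp => hR₀ t rfl p (le_trans (le_max_left _ _) hp)
    have hout : ∀ p : MomSpace, p ∉ Metric.closedBall (0 : MomSpace) R → R < ‖p‖ := by
      intro p hp
      simpa [Metric.mem_closedBall, dist_zero_right] using hp
    have hfcs : HasCompactSupport (f t) := by
      apply HasCompactSupport.intro (isCompact_closedBall (0 : MomSpace) R)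
      exact fun p hp => hfz p (hout p hp).le
    have hDzero : ∀ p : MomSpace, R < ‖p‖ → fderiv ℝ (fun q => f t q) p = 0 := by
      intro p hp
      have hev : (fun q => f t q) =ᶠ[nhds p] (fun _ => (0 : ℝ)) := by
        filter_upwards [(isOpen_lt continuous_const continuous_norm).mem_nhds hp] with q hq
        exact hfz q hq.le
      rw [hev.fderiv_eq]; exact fderiv_const_apply 0
    have hDcont : Continuous (fun p : MomSpace => fderiv ℝ (fun q => f t q) p (E t)) :=
      ((hft t).continuous_fderiv one_ne_zero).clm_apply continuous_const
    -- integrability of the pieces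
    have intA0 : Integrable (fun p : MomSpace => fderiv ℝ (fun q => f t q) p (E t) • p) := by
      apply (hDcont.smul continuous_id).integrable_of_hasCompactSupport
      apply HasCompactSupport.intro (isCompact_closedBall (0 : MomSpace) R)
      intro p hp
      simp only [Pi.smul_apply', id]
      rw [hDzero p (hout p hp)]
      simp
    have intf : Integrable (f t) := (hftc t).integrable_of_hasCompactSupport hfcs
    have intfp : Integrable (fun p : MomSpace => f t p • p) := by
      apply ((hftc t).smul continuous_id).integrable_of_hasCompactSupport
      apply HasCompactSupport.intro (isCompact_closedBall (0 : MomSpace) R)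
      intro p hp
      simp only [Pi.smul_apply', id]
      rw [hfz p (hout p hp).le]; simp
    have intA : Integrable (fun p : MomSpace =>
        (c * e * fderiv ℝ (fun q => f t q) p (E t)) • p) := by
      have h : (fun p : MomSpace => (c * e * fderiv ℝ (fun q => f t q) p (E t)) • p)
          = fun p : MomSpace => (c * e) • (fderiv ℝ (fun q => f t q) p (E t) • p) := by
        funext p; rw [smul_smul]
      rw [h]; exact intA0.smul (c * e)
    have intC : Integrable (fun p : MomSpace => ((c / τ) * f t p) • p) := by
      have h : (fun p : MomSpace => ((c / τ) * f t p) • p)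
          = fun p : MomSpace => (c / τ) • (f t p • p) := by
        funext p; rw [smul_smul]
      rw [h]; exact intfp.smul (c / τ)
    -- pointwise decomposition from the Boltzmann–Vlasov equation
    have hpt : ∀ p : MomSpace, (c * df t p) • p
        = ((c * e * fderiv ℝ (fun q => f t q) p (E t)) • p
            + ((c / τ) * angularAverage f t p) • p)
          - ((c / τ) * f t p) • p := by
      intro p
      have h0 : df t p = e * fderiv ℝ (fun q => f t q) p (E t)
          + (angularAverage f t p - f t p) / τ := by
        have := hBV t p; linarith
      have hsc : c * df t p = c * e * fderiv ℝ (fun q => f t q) p (E t)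
          + (c / τ) * angularAverage f t p - (c / τ) * f t p := by
        rw [h0]; field_simp; ring
      rw [hsc, sub_smul, add_smul]
    have intB : Integrable (fun p : MomSpace => ((c / τ) * angularAverage f t p) • p) := by
      have h : (fun p : MomSpace => ((c / τ) * angularAverage f t p) • p)
          = fun p : MomSpace => ((c * df t p) • p
              - (c * e * fderiv ℝ (fun q => f t q) p (E t)) • p
              + ((c / τ) * f t p) • p) := by
        funext p; rw [hpt p]; abel
      rw [h]; exact ((claimA t).1.sub intA).add intC
    -- compute the three integrals
    have hintB : ∫ p : MomSpace, ((c / τ) * angularAverage f t p) • p = 0 := by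
      apply drude_odd
      intro p
      simp [angularAverage, norm_neg]
    have hintA : ∫ p : MomSpace, (c * e * fderiv ℝ (fun q => f t q) p (E t)) • p
        = (c * e) • ((- ∫ p : MomSpace, f t p) • E t) := by
      have h : (fun p : MomSpace => (c * e * fderiv ℝ (fun q => f t q) p (E t)) • p)
          = fun p : MomSpace => (c * e) • (fderiv ℝ (fun q => f t q) p (E t) • p) := by
        funext p; rw [smul_smul]
      rw [h, integral_smul, drude_ibp (f t) (E t) (hft t) intA0 intf intfp]
    have hintC : ∫ p : MomSpace, ((c / τ) * f t p) • p = τ⁻¹ • G t := by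
      have h : (fun p : MomSpace => ((c / τ) * f t p) • p)
          = fun p : MomSpace => τ⁻¹ • ((c * f t p) • p) := by
        funext p; rw [smul_smul]; congr 1; field_simp
      rw [h, integral_smul]
    have hsplit : G' t = (∫ p : MomSpace, (c * e * fderiv ℝ (fun q => f t q) p (E t)) • p)
        + (∫ p : MomSpace, ((c / τ) * angularAverage f t p) • p)
        - ∫ p : MomSpace, ((c / τ) * f t p) • p := by
      show (∫ p : MomSpace, (c * df t p) • p)
          = (∫ p : MomSpace, (c * e * fderiv ℝ (fun q => f t q) p (E t)) • p)
            + (∫ p : MomSpace, ((c / τ) * angularAverage f t p) • p)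
            - ∫ p : MomSpace, ((c / τ) * f t p) • p
      have h : (fun p : MomSpace => (c * df t p) • p)
          = fun p : MomSpace =>
              ((c * e * fderiv ℝ (fun q => f t q) p (E t)) • p
                + ((c / τ) * angularAverage f t p) • p)
              - ((c / τ) * f t p) • p := funext hpt
      have intAB : Integrable (fun p : MomSpace =>
          (c * e * fderiv ℝ (fun q => f t q) p (E t)) • p
            + ((c / τ) * angularAverage f t p) • p) volume := intA.add intB
      rw [h, integral_sub intAB intC, integral_add intA intB]
    rw [hsplit, hintA, hintB, hintC, add_zero]
  -- conclusion
  refine ⟨fun t => (-(e / m)) • G' t, fun t => ?_, fun t => ?_⟩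
  · have h : drudeCurrent e m f = fun t => (-(e / m)) • G t := funext hJdef
    rw [h]
    exact ((claimA t).2).const_smul (-(e / m))
  · show τ • ((-(e / m)) • G' t) + drudeCurrent e m f t
        = ((e ^ 2 * electronDensity f t * τ) / m) • E t
    rw [hJdef t, claimB t]
    have hne : electronDensity f t = c * ∫ p : MomSpace, f t p := by
      rw [electronDensity]
      exact integral_const_mul c (f t)
    rw [hne]
    have hτ0 : τ ≠ 0 := hτ.ne'
    have hm0 : m ≠ 0 := hm.ne'
    match_scalars
    · field_simp
    · field_simp; ring
end
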